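/- arXiv:math/9812059 — 4 statements merged into one kernel-verified Lean document; each statement's English description precedes it below -/
import Mathlib

section
/- For every integer m > 0 and every c ∈ ℂ, the ℂ-vector space Θ_{m,c}(Γ) has dimension exactly m. -/
open Complex

/-- `Θ_{m,c}(Γ)`: the space of entire functions `f : ℂ → ℂ` with `f(z+1) = f(z)` and
`f(z+η) = e^{−2πi(mz+c)} f(z)` for all `z`, as a `ℂ`-submodule of `ℂ → ℂ`. -/
noncomputable def ThetaSpace (η : ℂ) (m : ℤ) (c : ℂ) : Submodule ℂ (ℂ → ℂ) where
  carrier := {f | Differentiable ℂ f ∧ (∀ z : ℂ, f (z + 1) = f z) ∧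
    ∀ z : ℂ, f (z + η) = Complex.exp (-(2 * (Real.pi : ℂ) * I) * (m * z + c)) * f z}
  add_mem' := by
    rintro f g ⟨hf1, hf2, hf3⟩ ⟨hg1, hg2, hg3⟩
    refine ⟨hf1.add hg1, fun z => ?_, fun z => ?_⟩
    · simp [hf2 z, hg2 z]
    · simp only [Pi.add_apply, hf3 z, hg3 z]; ring
  zero_mem' := ⟨differentiable_const 0, fun z => rfl, fun z => by simp⟩
  smul_mem' := by
    rintro a f ⟨hf1, hf2, hf3⟩
    refine ⟨hf1.const_smul a, fun z => ?_, fun z => ?_⟩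
    · simp [hf2 z]
    · simp only [Pi.smul_apply, hf3 z, smul_eq_mul]; ring

open Real intervalIntegral MeasureTheory

noncomputable def coeffA (f : ℂ → ℂ) (k : ℤ) : ℂ :=
  ∫ t in (0:ℝ)..1, cexp (-(2 * (π:ℂ) * I) * k * t) * f t

lemma shift_integral (h : ℂ → ℂ) (hd : Differentiable ℂ h) (hp : ∀ z, h (z + 1) = h z) (η : ℂ) :
    (∫ t in (0:ℝ)..1, h (t + η)) = ∫ t in (0:ℝ)..1, h t := by
  have key : (∫ x : ℝ in (0:ℝ)..1, h (x + (0:ℝ) * I)) - (∫ x : ℝ in (0:ℝ)..1, h (x + η.im * I)) +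
      I • (∫ y : ℝ in (0:ℝ)..η.im, h (1 + y * I)) -
      I • (∫ y : ℝ in (0:ℝ)..η.im, h (0 + y * I)) = 0 := by
    have := Complex.integral_boundary_rect_eq_zero_of_differentiableOn h 0
      (1 + η.im * I) (hd.differentiableOn)
    simpa using this
  have hvert : (∫ y : ℝ in (0:ℝ)..η.im, h (1 + y * I)) = ∫ y : ℝ in (0:ℝ)..η.im, h (0 + y * I) := by
    refine intervalIntegral.integral_congr fun y _ => ?_
    rw [show (1 : ℂ) + y * I = (0 + y * I) + 1 by ring, hp]
  have h2 : (∫ x : ℝ in (0:ℝ)..1, h (x + η.im * I)) = ∫ x : ℝ in (0:ℝ)..1, h x := by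
    have := key
    rw [hvert] at this
    have : (∫ x : ℝ in (0:ℝ)..1, h (x + (0:ℝ) * I)) = ∫ x : ℝ in (0:ℝ)..1, h (x + η.im * I) := by
      linear_combination this
    rw [← this]
    refine intervalIntegral.integral_congr fun x _ => ?_
    norm_num
  calc (∫ t in (0:ℝ)..1, h (t + η))
      = ∫ t in (0:ℝ)..1, h ((t + η.re : ℝ) + η.im * I) := by
        refine intervalIntegral.integral_congr fun t _ => ?_
        congr 1
        simp [Complex.ext_iff]
    _ = ∫ t in (0:ℝ)+η.re..(1:ℝ)+η.re, h (t + η.im * I) :=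
        intervalIntegral.integral_comp_add_right (fun u : ℝ => h ((u:ℂ) + η.im * I)) η.re
    _ = ∫ t in (0:ℝ)..1, h (t + η.im * I) := by
        have hper : Function.Periodic (fun u : ℝ => h ((u:ℂ) + η.im * I)) 1 := by
          intro u
          simp only []
          rw [show ((u + 1 : ℝ) : ℂ) + η.im * I = ((u : ℂ) + η.im * I) + 1 by push_cast; ring, hp]
        rw [show (0:ℝ)+η.re = η.re by ring, show (1:ℝ)+η.re = η.re + 1 by ring]
        simpa using hper.intervalIntegral_add_eq η.re 0
    _ = ∫ t in (0:ℝ)..1, h t := h2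

lemma coeff_rec (η : ℂ) (m : ℤ) (c : ℂ) (f : ℂ → ℂ) (hd : Differentiable ℂ f)
    (h1 : ∀ z, f (z + 1) = f z)
    (h2 : ∀ z, f (z + η) = cexp (-(2 * (π:ℂ) * I) * (m * z + c)) * f z) (k : ℤ) :
    coeffA f (k + m) = cexp ((2 * (π:ℂ) * I) * (k * η + c)) * coeffA f k := by
  set h : ℂ → ℂ := fun z => cexp (-(2 * (π:ℂ) * I) * k * z) * f z with hh
  have hhd : Differentiable ℂ h := by
    apply Differentiable.mul _ hd
    exact (differentiable_const _ |>.mul differentiable_id).cexp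
  have hhp : ∀ z, h (z + 1) = h z := by
    intro z
    simp only [hh, h1 z]
    congr 1
    have h1 : cexp (-(k:ℂ) * (2*(π:ℂ)*I)) = 1 := by
      simpa using Complex.exp_int_mul_two_pi_mul_I (-k)
    rw [show -(2 * (π:ℂ) * I) * k * (z + 1) = -(2 * (π:ℂ) * I) * k * z + (-(k:ℂ)) * (2*π*I) by ring,
      Complex.exp_add, h1, mul_one]
  have key := shift_integral h hhd hhp η
  have lhs : (∫ t in (0:ℝ)..1, h (t + η))
      = cexp (-(2 * (π:ℂ) * I) * (k * η + c)) * coeffA f (k + m) := by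
    rw [coeffA, ← intervalIntegral.integral_const_mul]
    refine intervalIntegral.integral_congr fun t _ => ?_
    simp only [hh, h2 (t:ℂ)]
    rw [← mul_assoc, ← mul_assoc, ← Complex.exp_add, ← Complex.exp_add]
    congr 2
    push_cast
    ring
  have hrhs : coeffA f k = ∫ t in (0:ℝ)..1, h ↑t := rfl
  have key2 : cexp (-(2 * (π:ℂ) * I) * (k * η + c)) * coeffA f (k + m) = coeffA f k := by
    rw [← lhs, key, hrhs]
  calc coeffA f (k + m)
      = cexp ((2 * (π:ℂ) * I) * (k * η + c)) *
        (cexp (-(2 * (π:ℂ) * I) * (k * η + c)) * coeffA f (k + m)) := by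
        rw [← mul_assoc, ← Complex.exp_add,
          show (2 * (π:ℂ) * I) * (k * η + c) + -(2 * (π:ℂ) * I) * (k * η + c) = 0 by ring,
          Complex.exp_zero, one_mul]
    _ = cexp ((2 * (π:ℂ) * I) * (k * η + c)) * coeffA f k := by rw [key2]

-- relate coeffA to fourierCoeffOn
lemma coeffA_eq_fourierCoeffOn (f : ℂ → ℂ) (n : ℤ) :
    fourierCoeffOn (zero_lt_one) (fun x : ℝ => f x) n = coeffA f n := by
  rw [fourierCoeffOn_eq_integral, coeffA]
  norm_num
  refine intervalIntegral.integral_congr fun x _ => ?_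
  have harg : (2 * (π:ℂ) * I * n * x) = ((2*π*n*x : ℝ) : ℂ) * I := by push_cast; ring
  have hs : (starRingEnd ℂ) (cexp (2 * (π:ℂ) * I * n * x)) = cexp (-(2 * (π:ℂ) * I * n * x)) := by
    rw [harg, ← Complex.exp_conj, map_mul, Complex.conj_I, Complex.conj_ofReal, mul_neg]
  rw [hs]

-- continuous periodic function on ℝ with all Fourier coefficients zero vanishes
lemma zero_of_fourierCoeffOn_eq_zero (g : ℝ → ℂ) (hc : Continuous g)
    (hper : ∀ x, g (x + 1) = g x)
    (h : ∀ n : ℤ, fourierCoeffOn (zero_lt_one) g n = 0) : ∀ x ∈ Set.Ico (0:ℝ) 1, g x = 0 := by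
  haveI : Fact (0 < (1:ℝ)) := ⟨one_pos⟩
  set G : AddCircle (1:ℝ) → ℂ := AddCircle.liftIco 1 0 g with hG
  have hGc : Continuous G := by
    apply AddCircle.liftIco_continuous
    · rw [zero_add, ← hper 0, zero_add]
    · exact hc.continuousOn
  have hGcoeff : ∀ n : ℤ, fourierCoeff G n = 0 := by
    intro n
    rw [hG, fourierCoeff_liftIco_eq]
    simpa using h n
  -- pass to L²
  set Gc : C(AddCircle (1:ℝ), ℂ) := ⟨G, hGc⟩ with hGc'
  have hL : ContinuousMap.toLp (E := ℂ) 2 AddCircle.haarAddCircle ℂ Gc = 0 := by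
    have : ∀ n : ℤ, fourierBasis.repr (ContinuousMap.toLp (E := ℂ) 2 AddCircle.haarAddCircle ℂ Gc) n = 0 := by
      intro n
      rw [fourierBasis_repr, fourierCoeff_toLp]
      exact hGcoeff n
    have h0 : fourierBasis.repr (ContinuousMap.toLp (E := ℂ) 2 AddCircle.haarAddCircle ℂ Gc) = 0 := by
      ext n; exact this n
    have := congrArg (@fourierBasis (1:ℝ) ⟨one_pos⟩).repr.symm h0
    simpa using this
  have hG0 : Gc = 0 := by
    have := ContinuousMap.toLp_injective (α := AddCircle (1:ℝ)) (E := ℂ) (𝕜 := ℂ) (p := 2)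
      (AddCircle.haarAddCircle)
    refine this ?_
    rw [hL, map_zero]
  intro x hx
  have h1 : G (x : AddCircle (1:ℝ)) = g x := AddCircle.liftIco_coe_apply (by simpa using hx)
  rw [← h1]
  have h2 : Gc (x : AddCircle (1:ℝ)) = 0 := by rw [hG0]; simp
  exact h2

lemma eq_zero_of_coeffA_eq_zero (η : ℂ) (m : ℤ) (hm : 0 < m) (c : ℂ) (f : ℂ → ℂ)
    (hd : Differentiable ℂ f) (h1 : ∀ z, f (z + 1) = f z)
    (h2 : ∀ z, f (z + η) = cexp (-(2 * (π:ℂ) * I) * (m * z + c)) * f z)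
    (h0 : ∀ j : ℤ, 0 ≤ j → j < m → coeffA f j = 0) : f = 0 := by
  -- step 1: all coefficients vanish
  have hrec := coeff_rec η m c f hd h1 h2
  have up : ∀ k : ℤ, coeffA f k = 0 → coeffA f (k + m) = 0 := by
    intro k hk; rw [hrec k, hk, mul_zero]
  have down : ∀ k : ℤ, coeffA f (k + m) = 0 → coeffA f k = 0 := by
    intro k hk
    rw [hrec k] at hk
    exact (mul_eq_zero.mp hk).resolve_left (Complex.exp_ne_zero _)
  have main : ∀ n : ℕ, ∀ r : ℤ, 0 ≤ r → r < m →
      coeffA f (r + n * m) = 0 ∧ coeffA f (r - n * m) = 0 := by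
    intro n
    induction n with
    | zero => intro r hr hr'; constructor <;> simpa using h0 r hr hr'
    | succ n ih =>
      intro r hr hr'
      constructor
      · have := up (r + n * m) (ih r hr hr').1
        rw [show r + (n+1 : ℕ) * m = r + n * m + m by push_cast; ring]
        exact this
      · apply down
        have := (ih r hr hr').2
        rw [show r - (n+1 : ℕ) * m + m = r - n * m by push_cast; ring]
        exact this
  have hall : ∀ k : ℤ, coeffA f k = 0 := by
    intro k
    have hr0 : 0 ≤ k % m := Int.emod_nonneg k (by omega)
    have hr1 : k % m < m := Int.emod_lt_of_pos k hm
    have hk : k = k % m + (k / m) * m := by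
      have := Int.mul_ediv_add_emod k m
      linarith
    rcases le_or_gt 0 (k / m) with h | h
    · have := (main (k / m).toNat (k % m) hr0 hr1).1
      rwa [Int.toNat_of_nonneg h, ← hk] at this
    · have := (main (-(k / m)).toNat (k % m) hr0 hr1).2
      rw [Int.toNat_of_nonneg (by omega)] at this
      rwa [show k % m - -(k / m) * m = k % m + (k / m) * m by ring, ← hk] at this
  -- step 2: f vanishes on [0,1)
  have hzero : ∀ x ∈ Set.Ico (0:ℝ) 1, f x = 0 := by
    refine zero_of_fourierCoeffOn_eq_zero (fun x : ℝ => f x) ?_ ?_ ?_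
    · exact hd.continuous.comp Complex.continuous_ofReal
    · intro x
      show f ((x + 1 : ℝ) : ℂ) = f (x : ℂ)
      rw [show ((x + 1 : ℝ) : ℂ) = (x : ℂ) + 1 by push_cast; ring, h1]
    · intro n
      rw [coeffA_eq_fourierCoeffOn]
      exact hall n
  -- step 3: identity theorem
  have hA : AnalyticOnNhd ℂ f Set.univ := fun z _ => hd.analyticAt z
  have hfreq : ∃ᶠ z in nhdsWithin (1/2 : ℂ) {(1/2 : ℂ)}ᶜ, f z = 0 := by
    set u : ℕ → ℂ := fun n => ((1/2 + 1/(n+3) : ℝ) : ℂ) with hu'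
    have hinv : ∀ n : ℕ, (0:ℝ) < 1/(n+3) ∧ (1:ℝ)/(n+3) ≤ 1/3 := by
      intro n
      constructor
      · positivity
      · rw [div_le_div_iff₀ (by positivity) (by norm_num)]
        have : (0:ℝ) ≤ n := Nat.cast_nonneg n
        linarith
    have hu0 : ∀ n : ℕ, f (u n) = 0 := by
      intro n
      refine hzero _ ⟨?_, ?_⟩
      · have := (hinv n).1; linarith
      · have := (hinv n).2; linarith
    have htend : Filter.Tendsto u Filter.atTop (nhdsWithin (1/2 : ℂ) {(1/2 : ℂ)}ᶜ) := by
      apply tendsto_nhdsWithin_of_tendsto_nhds_of_eventually_within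
      · have ha : Filter.Tendsto (fun n : ℕ => ((n:ℝ)+3)) Filter.atTop Filter.atTop :=
          Filter.tendsto_atTop_add_const_right _ 3 tendsto_natCast_atTop_atTop
        have hb := ha.inv_tendsto_atTop
        have hc : Filter.Tendsto (fun n : ℕ => (1/2 + 1/(n+3) : ℝ)) Filter.atTop (nhds (1/2)) := by
          have := (tendsto_const_nhds (x := (1/2:ℝ)) (f := Filter.atTop (α := ℕ))).add hb
          simpa [one_div] using this
        have := (Complex.continuous_ofReal.tendsto (1/2 : ℝ)).comp hc
        simpa [hu', Function.comp_def] using this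
      · filter_upwards with n
        simp only [hu', Set.mem_compl_iff, Set.mem_singleton_iff]
        intro hcontra
        have h'c : ((1/2 + 1/(n+3) : ℝ) : ℂ) = ((1/2 : ℝ) : ℂ) := by rw [hcontra]; norm_num
        have h' := Complex.ofReal_injective h'c
        have := (hinv n).1
        linarith
    exact htend.frequently (Filter.Eventually.frequently (Filter.Eventually.of_forall hu0))
  have := hA.eqOn_zero_of_preconnected_of_frequently_eq_zero
    isPreconnected_univ (Set.mem_univ (1/2 : ℂ)) hfreq
  funext z
  exact this (Set.mem_univ z)

noncomputable def thetaG (η : ℂ) (m : ℤ) (c : ℂ) (j : ℤ) : ℂ → ℂ :=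
  fun z => cexp (2 * (π:ℂ) * I * j * z) *
    jacobiTheta₂ ((m:ℂ) * z + ((j:ℂ) * η + (c - m * η / 2))) ((m:ℂ) * η)

lemma jacobiTheta₂_add_int (w τ : ℂ) (n : ℤ) : jacobiTheta₂ (w + n) τ = jacobiTheta₂ w τ := by
  refine tsum_congr fun k => ?_
  unfold jacobiTheta₂_term
  rw [show 2*(π:ℂ)*I*k*(w+n) + (π:ℂ)*I*k^2*τ
      = (2*(π:ℂ)*I*k*w + (π:ℂ)*I*k^2*τ) + ((k*n : ℤ) : ℂ) * (2*(π:ℂ)*I) by push_cast; ring,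
    Complex.exp_add, Complex.exp_int_mul_two_pi_mul_I, mul_one]

lemma im_int_mul (m : ℤ) (η : ℂ) : ((m:ℂ) * η).im = (m:ℝ) * η.im := by
  simp

lemma thetaG_mem (η : ℂ) (hη : 0 < η.im) (m : ℤ) (hm : 0 < m) (c : ℂ) (j : ℤ) :
    Differentiable ℂ (thetaG η m c j) ∧ (∀ z, thetaG η m c j (z+1) = thetaG η m c j z) ∧
    ∀ z, thetaG η m c j (z + η)
      = cexp (-(2*(π:ℂ)*I) * ((m:ℂ)*z + c)) * thetaG η m c j z := by
  have hτ : 0 < ((m:ℂ) * η).im := by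
    rw [im_int_mul]
    have h1 : (0:ℝ) < (m:ℝ) := by exact_mod_cast hm
    positivity
  refine ⟨?_, ?_, ?_⟩
  · apply Differentiable.mul
    · exact ((differentiable_const _).mul differentiable_id).cexp
    · intro z
      exact (differentiableAt_jacobiTheta₂_fst _ hτ).comp z (by fun_prop)
  · intro z
    unfold thetaG
    rw [show (m:ℂ) * (z+1) + ((j:ℂ)*η + (c - m*η/2))
        = ((m:ℂ)*z + ((j:ℂ)*η + (c - m*η/2))) + ((m:ℤ):ℂ) by push_cast; ring,
      jacobiTheta₂_add_int]
    congr 1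
    rw [show 2*(π:ℂ)*I*j*(z+1) = 2*(π:ℂ)*I*j*z + ((j:ℤ):ℂ)*(2*(π:ℂ)*I) by push_cast; ring,
      Complex.exp_add, Complex.exp_int_mul_two_pi_mul_I, mul_one]
  · intro z
    unfold thetaG
    rw [show (m:ℂ) * (z+η) + ((j:ℂ)*η + (c - m*η/2))
        = ((m:ℂ)*z + ((j:ℂ)*η + (c - m*η/2))) + (m:ℂ)*η by ring,
      jacobiTheta₂_add_left']
    simp only [← mul_assoc, ← Complex.exp_add]
    congr 2
    ring

lemma exp_unit_norm (l : ℤ) (t : ℝ) : ‖cexp (2*(π:ℂ)*I * (l:ℂ) * t)‖ = 1 := by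
  rw [show 2*(π:ℂ)*I*(l:ℂ)*(t:ℝ) = ((2*π*l*t : ℝ):ℂ) * I by push_cast; ring]
  exact Complex.norm_exp_ofReal_mul_I _

lemma integral_exp_int (l : ℤ) :
    (∫ t in (0:ℝ)..1, cexp (2*(π:ℂ)*I * (l:ℂ) * t)) = if l = 0 then 1 else 0 := by
  by_cases hl : l = 0
  · simp [hl]
  · rw [if_neg hl]
    have hc : (2*(π:ℂ)*I*(l:ℂ)) ≠ 0 := by
      simp [Real.pi_ne_zero, Complex.I_ne_zero, hl]
    rw [integral_exp_mul_complex hc]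
    have h1 : cexp (2*(π:ℂ)*I*(l:ℂ) * 1) = 1 := by
      rw [mul_one, show 2*(π:ℂ)*I*(l:ℂ) = ((l:ℤ):ℂ)*(2*(π:ℂ)*I) by push_cast; ring]
      exact Complex.exp_int_mul_two_pi_mul_I l
    rw [show ((1:ℝ):ℂ) = (1:ℂ) from by norm_num, show ((0:ℝ):ℂ) = (0:ℂ) from by norm_num,
      h1, mul_zero, Complex.exp_zero, sub_self, zero_div]

lemma coeffA_thetaG (η : ℂ) (hη : 0 < η.im) (m : ℤ) (hm : 0 < m) (c : ℂ) (j k : ℤ)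
    (hj0 : 0 ≤ j) (hjm : j < m) (hk0 : 0 ≤ k) (hkm : k < m) :
    coeffA (thetaG η m c j) k = if k = j then 1 else 0 := by
  have hτ : 0 < ((m:ℂ) * η).im := by
    rw [im_int_mul]
    have h1 : (0:ℝ) < (m:ℝ) := by exact_mod_cast hm
    positivity
  set τ : ℂ := (m:ℂ) * η with hτ'
  set b : ℂ := (j:ℂ) * η + (c - m * η / 2) with hb'
  set F : ℤ → ℝ → ℂ := fun n t =>
    jacobiTheta₂_term n b τ * cexp (2*(π:ℂ)*I * ((n*m + j - k : ℤ):ℂ) * t) with hF'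
  -- pointwise expansion
  have hpt : ∀ t : ℝ, cexp (-(2 * (π:ℂ) * I) * k * t) * thetaG η m c j t = ∑' n : ℤ, F n t := by
    intro t
    have hθ : jacobiTheta₂ ((m:ℂ) * t + b) τ = ∑' n : ℤ, jacobiTheta₂_term n ((m:ℂ)*t + b) τ := rfl
    rw [thetaG, hθ, ← tsum_mul_left, ← tsum_mul_left]
    refine tsum_congr fun n => ?_
    simp only [hF', jacobiTheta₂_term, ← Complex.exp_add]
    congr 1
    push_cast
    ring
  -- integrability and norms
  have hFcont : ∀ n : ℤ, Continuous (F n) := by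
    intro n
    apply continuous_const.mul
    apply Complex.continuous_exp.comp
    exact (continuous_const.mul Complex.continuous_ofReal)
  have hF_int : ∀ n : ℤ, IntegrableOn (F n) (Set.Ioc (0:ℝ) 1) volume := fun n =>
    ((hFcont n).continuousOn).integrableOn_compact isCompact_Icc |>.mono_set Set.Ioc_subset_Icc_self
  have hnormF : ∀ n : ℤ, ∀ t : ℝ, ‖F n t‖ = ‖jacobiTheta₂_term n b τ‖ := by
    intro n t
    rw [hF']
    simp only [norm_mul]
    rw [exp_unit_norm, mul_one]
  have hF_norm_int : ∀ n : ℤ, (∫ t in Set.Ioc (0:ℝ) 1, ‖F n t‖) = ‖jacobiTheta₂_term n b τ‖ := by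
    intro n
    simp_rw [hnormF n]
    rw [setIntegral_const]
    simp
  have hsum : Summable (fun n : ℤ => ‖jacobiTheta₂_term n b τ‖) := by
    apply Summable.of_nonneg_of_le (fun n => norm_nonneg _)
      (fun n => norm_jacobiTheta₂_term_le hτ (le_refl |b.im|) (le_refl τ.im) n)
    simpa using summable_pow_mul_jacobiTheta₂_term_bound |b.im| hτ 0
  have hF_sum : Summable fun n : ℤ => ∫ t in Set.Ioc (0:ℝ) 1, ‖F n t‖ := by
    simpa only [hF_norm_int] using hsum
  have hswap := MeasureTheory.hasSum_integral_of_summable_integral_norm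
    (μ := volume.restrict (Set.Ioc (0:ℝ) 1)) (F := F) hF_int hF_sum
  -- value of each integral
  have hval : ∀ n : ℤ, (∫ t in Set.Ioc (0:ℝ) 1, F n t)
      = jacobiTheta₂_term n b τ * (if (n*m + j - k : ℤ) = 0 then 1 else 0) := by
    intro n
    rw [← intervalIntegral.integral_of_le zero_le_one]
    rw [hF']
    simp only []
    rw [intervalIntegral.integral_const_mul, integral_exp_int]
  -- put it together
  have hcoeff : coeffA (thetaG η m c j) k = ∑' n : ℤ, (∫ t in Set.Ioc (0:ℝ) 1, F n t) := by
    rw [coeffA, intervalIntegral.integral_of_le zero_le_one,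
      setIntegral_congr_fun measurableSet_Ioc (fun t _ => hpt t)]
    exact hswap.tsum_eq.symm
  rw [hcoeff]
  by_cases hkj : k = j
  · subst hkj
    rw [tsum_eq_single 0]
    · rw [hval 0]
      norm_num [jacobiTheta₂_term]
    · intro n hn
      rw [hval n]
      have : (n*m + k - k : ℤ) ≠ 0 := by
        have hm0 : m ≠ 0 := by omega
        have : n * m ≠ 0 := mul_ne_zero hn hm0
        omega
      rw [if_neg this, mul_zero]
  · rw [if_neg hkj]
    have hzero : ∀ n : ℤ, (∫ t in Set.Ioc (0:ℝ) 1, F n t) = 0 := by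
      intro n
      rw [hval n]
      have : (n*m + j - k : ℤ) ≠ 0 := by
        rcases lt_trichotomy n 0 with h | h | h
        · have : n * m ≤ -m := by nlinarith
          omega
        · subst h; simpa using fun hc => hkj (by omega)
        · have : m ≤ n * m := by nlinarith
          omega
      rw [if_neg this, mul_zero]
    rw [tsum_congr hzero, tsum_zero]

lemma coeffA_add (f g : ℂ → ℂ) (hf : Continuous f) (hg : Continuous g) (k : ℤ) :
    coeffA (f + g) k = coeffA f k + coeffA g k := by
  unfold coeffA
  rw [← intervalIntegral.integral_add]
  · refine intervalIntegral.integral_congr fun t _ => ?_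
    simp only [Pi.add_apply]
    ring
  · exact ((Complex.continuous_exp.comp (by fun_prop)).mul
      (hf.comp Complex.continuous_ofReal)).intervalIntegrable _ _
  · exact ((Complex.continuous_exp.comp (by fun_prop)).mul
      (hg.comp Complex.continuous_ofReal)).intervalIntegrable _ _

lemma coeffA_const_mul (a : ℂ) (f : ℂ → ℂ) (k : ℤ) :
    coeffA (fun z => a * f z) k = a * coeffA f k := by
  unfold coeffA
  rw [← intervalIntegral.integral_const_mul]
  refine intervalIntegral.integral_congr fun t _ => ?_
  ring

lemma coeffA_smul (a : ℂ) (f : ℂ → ℂ) (k : ℤ) : coeffA (a • f) k = a * coeffA f k := by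
  rw [← coeffA_const_mul]
  rfl

lemma coeffA_finset_sum {ι : Type*} (s : Finset ι) (g : ι → ℂ → ℂ)
    (hg : ∀ i ∈ s, Continuous (g i)) (k : ℤ) :
    coeffA (fun z => ∑ i ∈ s, g i z) k = ∑ i ∈ s, coeffA (g i) k := by
  unfold coeffA
  rw [← intervalIntegral.integral_finset_sum]
  · refine intervalIntegral.integral_congr fun t _ => ?_
    rw [Finset.mul_sum]
  · intro i hi
    exact ((Complex.continuous_exp.comp (by fun_prop)).mul
      ((hg i hi).comp Complex.continuous_ofReal)).intervalIntegrable _ _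

/-- For every integer `m > 0` and every `c ∈ ℂ`, `dim_ℂ Θ_{m,c}(Γ) = m`. -/
theorem finrank_thetaSpace_pos (η : ℂ) (hη : 0 < η.im) (m : ℤ) (hm : 0 < m) (c : ℂ) :
    (Module.finrank ℂ (ThetaSpace η m c) : ℤ) = m := by
  set M : ℕ := m.toNat with hM
  have hMm : (M : ℤ) = m := Int.toNat_of_nonneg hm.le
  -- the linear map of Fourier coefficients
  set Φ : ThetaSpace η m c →ₗ[ℂ] (Fin M → ℂ) :=
    { toFun := fun f => fun i => coeffA (f : ℂ → ℂ) (i : ℕ)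
      map_add' := by
        rintro ⟨f, hf⟩ ⟨g, hg⟩
        funext i
        exact coeffA_add f g hf.1.continuous hg.1.continuous _
      map_smul' := by
        rintro a ⟨f, hf⟩
        funext i
        exact coeffA_smul a f _ } with hΦ
  have hinj : Function.Injective Φ := by
    rw [injective_iff_map_eq_zero]
    rintro ⟨f, hf⟩ h0
    have hc : ∀ j : ℤ, 0 ≤ j → j < m → coeffA f j = 0 := by
      intro j hj0 hjm
      have hjM : j.toNat < M := by omega
      have := congrFun h0 ⟨j.toNat, hjM⟩
      simpa [hΦ, Int.toNat_of_nonneg hj0] using this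
    have := eq_zero_of_coeffA_eq_zero η m hm c f hf.1 hf.2.1 hf.2.2 hc
    exact Subtype.ext this
  have hsurj : Function.Surjective Φ := by
    intro v
    set f : ℂ → ℂ := fun z => ∑ i : Fin M, v i * thetaG η m c (i : ℕ) z with hf'
    have hbound : ∀ i : Fin M, (0:ℤ) ≤ (i:ℕ) ∧ ((i:ℕ):ℤ) < m := by
      intro i
      refine ⟨Int.ofNat_nonneg _, ?_⟩
      have := i.2
      omega
    have hθmem : ∀ i : Fin M, thetaG η m c (i:ℕ) ∈ ThetaSpace η m c := by
      intro i
      obtain ⟨hd, hp, hq⟩ := thetaG_mem η hη m hm c (i:ℕ)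
      exact ⟨hd, hp, hq⟩
    have hfmem : f ∈ ThetaSpace η m c := by
      rw [hf', show (fun z => ∑ i : Fin M, v i * thetaG η m c (i : ℕ) z)
          = ∑ i : Fin M, v i • thetaG η m c (i : ℕ) from by funext z; simp]
      exact Submodule.sum_mem _ fun i _ => Submodule.smul_mem _ _ (hθmem i)
    refine ⟨⟨f, hfmem⟩, ?_⟩
    funext i
    show coeffA f ((i:ℕ):ℤ) = v i
    rw [hf', coeffA_finset_sum]
    · have hval : ∀ i' : Fin M, coeffA (fun z => v i' * thetaG η m c (i':ℕ) z) ((i:ℕ):ℤ)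
          = v i' * (if i' = i then 1 else 0) := by
        intro i'
        rw [coeffA_const_mul, coeffA_thetaG η hη m hm c _ _ (hbound i').1 (hbound i').2
          (hbound i).1 (hbound i).2]
        congr 1
        simp [Fin.ext_iff, eq_comm]
      simp only [hval]
      simp
    · intro i' _
      have hθc := (thetaG_mem η hη m hm c (i':ℕ)).1.continuous
      exact continuous_const.mul hθc
  have e : (ThetaSpace η m c) ≃ₗ[ℂ] (Fin M → ℂ) := LinearEquiv.ofBijective Φ ⟨hinj, hsurj⟩
  rw [e.finrank_eq, Module.finrank_fin_fun]
  exact hMm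
end

section
/- For every integer m < 0 and every c ∈ ℂ, the space Θ_{m,c}(Γ) consists only of the zero function. -/
open Complex

/-- An elementary bound on an upside-down real quadratic, used to bound the exponential
factors in the theta functional equation uniformly. -/
lemma ThetaSpaceAux.quad_bound (p t mr ci y r : ℝ) (hp : 0 < p) (ht : 0 < t) (hmr : mr < 0)
    (hy0 : 0 ≤ y) (hy1 : y ≤ t) :
    2 * p * (mr * r * y + r * ci) + p * (mr * t * r * (r - 1)) ≤
      (3 * p * (-mr) * t + 2 * p * |ci|) ^ 2 / (4 * (-(p * mr * t))) := by
  have ha : 0 < -(p * mr * t) := by nlinarith [mul_pos (mul_pos hp (neg_pos.mpr hmr)) ht]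
  set b : ℝ := 2 * p * mr * y + 2 * p * ci - p * mr * t with hb
  set B : ℝ := 3 * p * (-mr) * t + 2 * p * |ci| with hB
  have heq : 2 * p * (mr * r * y + r * ci) + p * (mr * t * r * (r - 1)) =
      -(-(p * mr * t)) * r ^ 2 + b * r := by rw [hb]; ring
  rw [heq]
  have hb1 : b ≤ B := by
    have h2 : ci ≤ |ci| := le_abs_self _
    have h1 : 2 * p * mr * y ≤ 0 := by nlinarith
    rw [hb, hB]; nlinarith
  have hb2 : -B ≤ b := by
    have h1 : 2 * p * mr * t ≤ 2 * p * mr * y := by nlinarith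
    have h2 : -|ci| ≤ ci := neg_abs_le _
    rw [hb, hB]; nlinarith
  have hbsq : b ^ 2 ≤ B ^ 2 := sq_le_sq' hb2 hb1
  have h3 : -(-(p * mr * t)) * r ^ 2 + b * r ≤ b ^ 2 / (4 * (-(p * mr * t))) := by
    rw [le_div_iff₀ (by positivity)]
    nlinarith [sq_nonneg (b - 2 * (-(p * mr * t)) * r)]
  calc -(-(p * mr * t)) * r ^ 2 + b * r ≤ b ^ 2 / (4 * (-(p * mr * t))) := h3
    _ ≤ B ^ 2 / (4 * (-(p * mr * t))) := by gcongr

/-- For every integer `m < 0` and every `c ∈ ℂ`, `Θ_{m,c}(Γ)` consists only of the zero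
function. -/
theorem thetaSpace_neg_eq_bot (η : ℂ) (hη : 0 < η.im) (m : ℤ) (hm : m < 0) (c : ℂ) :
    ThetaSpace η m c = ⊥ := by
  rw [Submodule.eq_bot_iff]
  rintro f ⟨hf1, hf2, hf3⟩
  have ht : 0 < η.im := hη
  have hmr : (m : ℝ) < 0 := by exact_mod_cast hm
  have hπ : 0 < Real.pi := Real.pi_pos
  -- quasiperiodicity along kη
  have key : ∀ (k : ℤ) (z : ℂ), f (z + k * η) =
      Complex.exp (-(2 * (Real.pi : ℂ) * I) * ((m:ℂ) * k * z + k * c)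
        - (Real.pi : ℂ) * I * ((m:ℂ) * η * k * (k - 1))) * f z := by
    intro k
    induction k using Int.induction_on with
    | zero => intro z; push_cast; simp
    | succ i ih =>
      intro z
      have h1 : (z : ℂ) + ((i:ℤ)+1 : ℤ) * η = (z + (i:ℤ) * η) + η := by push_cast; ring
      rw [h1, hf3, ih, ← mul_assoc, ← Complex.exp_add]
      congr 1
      push_cast
      ring
    | pred i ih =>
      intro z
      have h1 : (z : ℂ) + (-(i:ℤ)-1 : ℤ) * η + η = z + (-(i:ℤ) : ℤ) * η := by push_cast; ring
      have h2 := hf3 (z + (-(i:ℤ)-1 : ℤ) * η)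
      rw [h1, ih] at h2
      have h3 : (Complex.exp (-(2 * (Real.pi : ℂ) * I) *
            ((m:ℂ) * (z + ((-(i:ℤ)-1 : ℤ) : ℂ) * η) + c)))⁻¹ *
          Complex.exp (-(2 * (Real.pi : ℂ) * I) * ((m:ℂ) * ((-(i:ℤ) : ℤ) : ℂ) * z
              + ((-(i:ℤ) : ℤ) : ℂ) * c)
            - (Real.pi : ℂ) * I * ((m:ℂ) * η * ((-(i:ℤ) : ℤ) : ℂ) * (((-(i:ℤ) : ℤ) : ℂ) - 1))) =
          Complex.exp (-(2 * (Real.pi : ℂ) * I) * ((m:ℂ) * ((-(i:ℤ)-1 : ℤ) : ℂ) * z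
              + ((-(i:ℤ)-1 : ℤ) : ℂ) * c)
            - (Real.pi : ℂ) * I * ((m:ℂ) * η * ((-(i:ℤ)-1 : ℤ) : ℂ)
              * (((-(i:ℤ)-1 : ℤ) : ℂ) - 1))) := by
        rw [← Complex.exp_neg, ← Complex.exp_add]
        congr 1
        push_cast
        ring
      rw [← h3, mul_assoc, h2, ← mul_assoc,
        inv_mul_cancel₀ (Complex.exp_ne_zero _), one_mul]
  -- bound on the fundamental domain
  have hper : Function.Periodic f 1 := hf2
  obtain ⟨M, hM⟩ : ∃ M, ∀ w ∈ (fun p : ℝ × ℝ => (p.1 : ℂ) + p.2 * I) ''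
      (Set.Icc 0 1 ×ˢ Set.Icc 0 η.im), ‖f w‖ ≤ M := by
    exact ((isCompact_Icc.prod isCompact_Icc).image (by continuity)).exists_bound_of_continuousOn
      hf1.continuous.continuousOn
  have hM0 : 0 ≤ M := by
    refine le_trans (norm_nonneg (f 0)) (hM 0 ⟨(0, 0), ⟨⟨le_refl 0, zero_le_one⟩,
      ⟨le_refl 0, ht.le⟩⟩, by simp⟩)
  set C₀ : ℝ := (3 * Real.pi * (-(m:ℝ)) * η.im + 2 * Real.pi * |c.im|) ^ 2 /
      (4 * (-(Real.pi * (m:ℝ) * η.im))) with hC₀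
  -- global bound
  have hbdd : ∀ z : ℂ, ‖f z‖ ≤ Real.exp C₀ * M := by
    intro z
    set n : ℤ := ⌊z.im / η.im⌋ with hndef
    set w : ℂ := z - n * η with hwdef
    have hwz : w + n * η = z := by rw [hwdef]; ring
    have hwim : w.im = z.im - n * η.im := by
      rw [hwdef]
      simp only [Complex.sub_im, Complex.mul_im, Complex.intCast_re, Complex.intCast_im]
      ring
    have hy0 : 0 ≤ w.im := by
      have h1 : (n : ℝ) * η.im ≤ z.im := by
        rw [hndef]
        exact (le_div_iff₀ ht).mp (Int.floor_le _)
      rw [hwim]; linarith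
    have hy1 : w.im ≤ η.im := by
      have h2 : z.im < ((n : ℝ) + 1) * η.im := by
        rw [hndef]
        exact (div_lt_iff₀ ht).mp (by exact_mod_cast Int.lt_floor_add_one (z.im / η.im))
      rw [hwim]; nlinarith
    -- ‖f w‖ ≤ M via 1-periodicity
    have hfw : ‖f w‖ ≤ M := by
      have hper' : f (w - (⌊w.re⌋ : ℂ) * 1) = f w := hper.sub_int_mul_eq ⌊w.re⌋
      have hmem : w - (⌊w.re⌋ : ℂ) * 1 ∈ (fun p : ℝ × ℝ => (p.1 : ℂ) + p.2 * I) ''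
          (Set.Icc 0 1 ×ˢ Set.Icc 0 η.im) := by
        refine ⟨(Int.fract w.re, w.im), ⟨⟨Int.fract_nonneg _, (Int.fract_lt_one _).le⟩,
          ⟨hy0, hy1⟩⟩, ?_⟩
        show ((Int.fract w.re : ℝ) : ℂ) + (w.im : ℂ) * I = w - (⌊w.re⌋ : ℂ) * 1
        apply Complex.ext <;>
          simp only [Complex.add_re, Complex.add_im, Complex.mul_re, Complex.mul_im,
            Complex.I_re, Complex.I_im, Complex.ofReal_re, Complex.ofReal_im, Complex.sub_re,
            Complex.sub_im, Complex.intCast_re, Complex.intCast_im, Complex.one_re,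
            Complex.one_im, Int.fract] <;>
          ring
      rw [← hper']
      exact hM _ hmem
    -- the exponential factor
    have hz := key n w
    rw [hwz] at hz
    rw [hz, norm_mul]
    have hre : (-(2 * (Real.pi : ℂ) * I) * ((m:ℂ) * n * w + n * c)
        - (Real.pi : ℂ) * I * ((m:ℂ) * η * n * (n - 1))).re =
        2 * Real.pi * ((m:ℝ) * n * w.im + n * c.im)
          + Real.pi * ((m:ℝ) * η.im * n * (n - 1)) := by
      simp only [Complex.sub_re, Complex.add_re, Complex.add_im, Complex.mul_re, Complex.mul_im,
        Complex.neg_re, Complex.neg_im, Complex.I_re, Complex.I_im, Complex.ofReal_re,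
        Complex.ofReal_im, Complex.intCast_re, Complex.intCast_im, Complex.sub_im,
        Complex.one_re, Complex.one_im, Complex.re_ofNat, Complex.im_ofNat]
      ring
    have hexp : ‖Complex.exp (-(2 * (Real.pi : ℂ) * I) * ((m:ℂ) * n * w + n * c)
        - (Real.pi : ℂ) * I * ((m:ℂ) * η * n * (n - 1)))‖ ≤ Real.exp C₀ := by
      rw [Complex.norm_exp, hre]
      exact Real.exp_le_exp.mpr
        (ThetaSpaceAux.quad_bound Real.pi η.im (m:ℝ) c.im w.im (n:ℝ) hπ ht hmr hy0 hy1)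
    exact mul_le_mul hexp hfw (norm_nonneg _) (Real.exp_nonneg _)
  -- Liouville: f is constant
  have hbounded : Bornology.IsBounded (Set.range f) := by
    rw [isBounded_iff_forall_norm_le]
    exact ⟨Real.exp C₀ * M, by rintro x ⟨z, rfl⟩; exact hbdd z⟩
  have hc : ∀ z : ℂ, f z = f 0 := fun z => hf1.apply_eq_apply_of_bounded hbounded z 0
  -- conclude f 0 = 0
  have hm0 : (m : ℂ) ≠ 0 := Int.cast_ne_zero.mpr hm.ne
  have hval := hf3 (((1 : ℂ)/2 - c) / m)
  have harg : (m : ℂ) * (((1 : ℂ)/2 - c) / m) + c = 1/2 := by field_simp; ring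
  rw [harg] at hval
  have hexp2 : Complex.exp (-(2 * (Real.pi : ℂ) * I) * (1/2)) = -1 := by
    rw [show -(2 * (Real.pi : ℂ) * I) * (1/2) = -((Real.pi : ℂ) * I) from by ring,
      Complex.exp_neg, Complex.exp_pi_mul_I]
    norm_num
  rw [hexp2, hc (((1 : ℂ)/2 - c) / m + η), hc (((1 : ℂ)/2 - c) / m)] at hval
  have h0 : f 0 = 0 := by linear_combination hval / 2
  funext z
  rw [hc z, h0]
  rfl
end

section
/- For c ∈ ℂ: if c ∉ Γ then Θ_{0,c}(Γ) = {0}; and if c ∈ Γ, say c = a + bη with a, b ∈ ℤ, then Θ_{0,c}(Γ) is one-dimensional over ℂ, consisting exactly of the scalar multiples of the function z ↦ e^{−2πibz}. -/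
open Complex

/-- The lattice `Γ = ℤ + ℤη ⊂ ℂ`. -/
def latticeGamma (η : ℂ) : Set ℂ := {z | ∃ a b : ℤ, z = (a : ℂ) + (b : ℂ) * η}

section ThetaAux

open intervalIntegral MeasureTheory AddCircle Bornology Filter

lemma exp_neg_two_pi_I_int (k : ℤ) : Complex.exp (-(2 * (Real.pi:ℂ) * I) * k) = 1 := by
  rw [Complex.exp_eq_one_iff]; exact ⟨-k, by push_cast; ring⟩

lemma integral_shift_invariant (F : ℂ → ℂ) (hd : Differentiable ℂ F)
    (hp : ∀ z, F (z + 1) = F z) (w : ℂ) :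
    (∫ x : ℝ in (0:ℝ)..1, F (x + w)) = ∫ x : ℝ in (0:ℝ)..1, F x := by
  have step1 : (∫ x : ℝ in (0:ℝ)..1, F x) = ∫ x : ℝ in (0:ℝ)..1, F (x + w.im * I) := by
    have key := Complex.integral_boundary_rect_eq_zero_of_differentiableOn F 0
      (1 + w.im * I) (hd.differentiableOn)
    simp only [Complex.zero_re, Complex.zero_im, Complex.add_re, Complex.one_re,
      Complex.mul_re, Complex.I_re, Complex.I_im, Complex.ofReal_re, Complex.ofReal_im,
      Complex.add_im, Complex.one_im, Complex.mul_im] at key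
    norm_num at key
    have hvert : (∫ y : ℝ in (0:ℝ)..w.im, F (1 + y * I)) = ∫ y : ℝ in (0:ℝ)..w.im, F (y * I) := by
      apply intervalIntegral.integral_congr
      intro y _
      show F (1 + (y:ℝ) * I) = F ((y:ℝ) * I)
      rw [show (1:ℂ) + (y:ℝ) * I = ((y:ℝ) * I) + 1 by ring, hp]
    rw [hvert] at key
    linear_combination key
  have hper : Function.Periodic (fun x : ℝ => F (x + w.im * I)) 1 := by
    intro x
    simp only []
    rw [show ((x + 1 : ℝ) : ℂ) + w.im * I = (((x:ℝ):ℂ) + w.im * I) + 1 by push_cast; ring, hp]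
  have step2 : (∫ x : ℝ in w.re..(w.re + 1), F (x + w.im * I))
      = ∫ x : ℝ in (0:ℝ)..(0 + 1), F (x + w.im * I) := hper.intervalIntegral_add_eq w.re 0
  have step3 : (∫ x : ℝ in (0:ℝ)..1, F (x + w)) = ∫ x : ℝ in w.re..(w.re + 1), F (x + w.im * I) := by
    rw [show (∫ x : ℝ in (0:ℝ)..1, F (x + w)) = ∫ x : ℝ in (0:ℝ)..1,
        (fun t : ℝ => F (t + w.im * I)) (x + w.re) from ?_,
      intervalIntegral.integral_comp_add_right (fun t : ℝ => F ((t:ℝ) + w.im * I)) w.re]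
    · norm_num [add_comm]
    · apply intervalIntegral.integral_congr
      intro x _
      simp only []
      rw [show ((x + w.re : ℝ) : ℂ) + w.im * I = (x:ℝ) + w by
        push_cast; rw [add_assoc]; congr 1; exact (Complex.re_add_im w)]
  rw [step3, step2]
  rw [zero_add]
  exact step1.symm

lemma coeff_relation (η c : ℂ) (f : ℂ → ℂ) (hf : Differentiable ℂ f)
    (hp1 : ∀ z, f (z + 1) = f z)
    (hpη : ∀ z, f (z + η) = Complex.exp (-(2 * (Real.pi:ℂ) * I) * c) * f z) (n : ℤ) :
    Complex.exp (-(2 * (Real.pi:ℂ) * I) * (n * η + c)) *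
      (∫ x : ℝ in (0:ℝ)..1, Complex.exp (-(2 * (Real.pi:ℂ) * I) * (n * x)) * f x)
    = ∫ x : ℝ in (0:ℝ)..1, Complex.exp (-(2 * (Real.pi:ℂ) * I) * (n * x)) * f x := by
  set F : ℂ → ℂ := fun z => Complex.exp (-(2 * (Real.pi:ℂ) * I) * (n * z)) * f z with hF
  have hFd : Differentiable ℂ F := by
    apply Differentiable.mul _ hf
    exact (differentiable_const _ |>.mul (differentiable_const _ |>.mul differentiable_id)).cexp
  have hFp : ∀ z, F (z + 1) = F z := by
    intro z
    simp only [hF, hp1 z]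
    rw [show -(2 * (Real.pi:ℂ) * I) * (n * (z + 1))
      = -(2 * (Real.pi:ℂ) * I) * (n * z) + -(2 * (Real.pi:ℂ) * I) * n by ring,
      Complex.exp_add, exp_neg_two_pi_I_int n]
    ring
  have key := integral_shift_invariant F hFd hFp η
  have lhs_eq : (∫ x : ℝ in (0:ℝ)..1, F (x + η))
      = Complex.exp (-(2 * (Real.pi:ℂ) * I) * (n * η + c)) *
        ∫ x : ℝ in (0:ℝ)..1, Complex.exp (-(2 * (Real.pi:ℂ) * I) * (n * x)) * f x := by
    rw [← intervalIntegral.integral_const_mul]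
    apply intervalIntegral.integral_congr
    intro x _
    simp only [hF, hpη]
    rw [show -(2 * (Real.pi:ℂ) * I) * (n * ((x:ℝ) + η))
      = -(2 * (Real.pi:ℂ) * I) * (n * η) + -(2 * (Real.pi:ℂ) * I) * (n * (x:ℝ)) by ring,
      Complex.exp_add,
      show -(2 * (Real.pi:ℂ) * I) * ((n:ℂ) * η + c)
      = -(2 * (Real.pi:ℂ) * I) * (n * η) + -(2 * (Real.pi:ℂ) * I) * c by ring,
      Complex.exp_add]
    ring
  rw [← lhs_eq, key]

instance fact_zero_lt_one_real : Fact (0 < (1:ℝ)) := ⟨one_pos⟩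

lemma lift_fourierCoeff (f : ℂ → ℂ) (hper : Function.Periodic (fun x : ℝ => f x) 1) (n : ℤ) :
    fourierCoeff hper.lift n
    = ∫ x : ℝ in (0:ℝ)..1, Complex.exp (-(2 * (Real.pi:ℂ) * I) * (n * x)) * f x := by
  rw [fourierCoeff_eq_intervalIntegral _ n 0]
  norm_num
  apply intervalIntegral.integral_congr
  intro x _
  simp only [Function.Periodic.lift_coe, smul_eq_mul]
  congr 1
  rw [← Complex.exp_conj]
  congr 1
  simp only [map_mul, Complex.conj_I, Complex.conj_ofReal, map_ofNat, map_intCast]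
  ring

lemma fourier_uniqueness (φ : C(AddCircle (1:ℝ), ℂ))
    (h : ∀ n : ℤ, fourierCoeff (φ : AddCircle (1:ℝ) → ℂ) n = 0) : φ = 0 := by
  have h1 : fourierBasis.repr (ContinuousMap.toLp (E := ℂ) 2 haarAddCircle ℂ φ) = 0 := by
    ext i
    rw [fourierBasis_repr, fourierCoeff_toLp, h i]
    rfl
  have h2 : (ContinuousMap.toLp (E := ℂ) 2 haarAddCircle ℂ φ) = 0 := by
    apply fourierBasis.repr.injective
    rw [h1, map_zero]
  have h3 := ContinuousMap.toLp_injective (p := 2) (𝕜 := ℂ)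
    (haarAddCircle (T := 1)) (E := ℂ)
  exact h3 (a₁ := φ) (a₂ := 0) (by rw [h2]; simp)

lemma eq_zero_of_real_zero (f : ℂ → ℂ) (hf : Differentiable ℂ f)
    (h : ∀ x : ℝ, f x = 0) : ∀ z : ℂ, f z = 0 := by
  have ha : AnalyticOnNhd ℂ f Set.univ :=
    DifferentiableOn.analyticOnNhd hf.differentiableOn isOpen_univ
  have hfreq : ∃ᶠ z in nhdsWithin (0:ℂ) {(0:ℂ)}ᶜ, f z = 0 := by
    set u : ℕ → ℂ := fun k => ((((k:ℝ)+1)⁻¹ : ℝ) : ℂ) with hu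
    have hreal : Tendsto (fun k : ℕ => ((k:ℝ)+1)⁻¹) atTop (nhds (0:ℝ)) :=
      tendsto_one_div_add_atTop_nhds_zero_nat.congr (by intro k; rw [one_div])
    have htend : Tendsto u atTop (nhdsWithin 0 {(0:ℂ)}ᶜ) := by
      apply tendsto_nhdsWithin_of_tendsto_nhds_of_eventually_within
      · rw [show ((0:ℂ)) = ((0:ℝ):ℂ) by norm_num]
        exact (Complex.continuous_ofReal.tendsto 0).comp hreal
      · filter_upwards with k
        simp only [hu, Set.mem_compl_iff, Set.mem_singleton_iff, Complex.ofReal_ne_zero]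
        have : (0:ℝ) < ((k:ℝ)+1)⁻¹ := by positivity
        exact ne_of_gt this
    exact htend.frequently (Frequently.of_forall fun k => h _)
  intro z
  exact ha.eqOn_zero_of_preconnected_of_frequently_eq_zero isPreconnected_univ
    (Set.mem_univ 0) hfreq (Set.mem_univ z)

lemma lattice_case (η : ℂ) (hη : 0 < η.im) (a b : ℤ) (f : ℂ → ℂ)
    (hf : Differentiable ℂ f) (hp1 : ∀ z, f (z + 1) = f z)
    (hpη : ∀ z, f (z + η) = Complex.exp (-(2 * (Real.pi:ℂ) * I) * ((a:ℂ) + (b:ℂ) * η)) * f z) :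
    ∀ z : ℂ, f z = f 0 * Complex.exp (-(2 * (Real.pi:ℂ) * I) * ((b:ℂ) * z)) := by
  set e : ℂ → ℂ := fun z => Complex.exp ((2 * (Real.pi:ℂ) * I) * ((b:ℂ) * z)) with he
  set g : ℂ → ℂ := fun z => f z * e z with hg
  have hexp : ∀ w : ℂ, Complex.exp (-(2 * (Real.pi:ℂ) * I) * w) * Complex.exp ((2 * (Real.pi:ℂ) * I) * w) = 1 := by
    intro w; rw [← Complex.exp_add]; ring_nf; exact Complex.exp_zero
  have hgd : Differentiable ℂ g :=
    hf.mul ((differentiable_const _ |>.mul (differentiable_const _ |>.mul differentiable_id)).cexp)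
  have hgp1 : Function.Periodic g 1 := by
    intro z
    simp only [hg, he, hp1 z]
    rw [show (2 * (Real.pi:ℂ) * I) * ((b:ℂ) * (z+1))
      = (2 * (Real.pi:ℂ) * I) * ((b:ℂ) * z) + -(-(2 * (Real.pi:ℂ) * I) * (b:ℂ)) by ring,
      Complex.exp_add, Complex.exp_neg, exp_neg_two_pi_I_int b]
    simp
  have hgpη : Function.Periodic g η := by
    intro z
    simp only [hg, he, hpη z]
    rw [show (2 * (Real.pi:ℂ) * I) * ((b:ℂ) * (z+η))
      = (2 * (Real.pi:ℂ) * I) * ((b:ℂ) * z) + (2 * (Real.pi:ℂ) * I) * ((b:ℂ) * η) by ring,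
      Complex.exp_add,
      show -(2 * (Real.pi:ℂ) * I) * ((a:ℂ) + (b:ℂ) * η)
      = -(2 * (Real.pi:ℂ) * I) * (a:ℂ) + -((2 * (Real.pi:ℂ) * I) * ((b:ℂ) * η)) by ring,
      Complex.exp_add, Complex.exp_neg, exp_neg_two_pi_I_int a]
    field_simp [Complex.exp_ne_zero]
  have hcont : ContinuousOn (fun p : ℝ × ℝ => g ((p.1 : ℂ) + (p.2 : ℂ) * η))
      (Set.Icc 0 1 ×ˢ Set.Icc 0 1) := by
    apply Continuous.continuousOn
    exact hgd.continuous.comp (by continuity)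
  obtain ⟨C, hC⟩ := (isCompact_Icc.prod isCompact_Icc).exists_bound_of_continuousOn hcont
  have hbd : ∀ z : ℂ, ‖g z‖ ≤ C := by
    intro z
    set t : ℝ := z.im / η.im with ht
    set s : ℝ := z.re - t * η.re with hs
    have hz : z = (s:ℂ) + (t:ℂ) * η := by
      apply Complex.ext
      · simp [hs, Complex.add_re, Complex.mul_re, Complex.ofReal_re, Complex.ofReal_im]
      · simp only [Complex.add_im, Complex.mul_im, Complex.ofReal_re, Complex.ofReal_im,
          Complex.ofReal_re]
        rw [ht]; simp only [zero_mul, zero_add, add_zero]; rw [div_mul_cancel₀ _ hη.ne']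
    have key : g z = g (((Int.fract s : ℝ) : ℂ) + ((Int.fract t : ℝ) : ℂ) * η) := by
      have e1 : z = (((((Int.fract s : ℝ) : ℂ)) + (((Int.fract t : ℝ) : ℂ)) * η) + (⌊t⌋ : ℂ) * η)
          + (⌊s⌋:ℂ) * 1 := by
        rw [hz]
        have hfs : ((Int.fract s : ℝ) : ℂ) = (s:ℂ) - (⌊s⌋:ℂ) := by
          rw [Int.fract]; push_cast; ring
        have hft : ((Int.fract t : ℝ) : ℂ) = (t:ℂ) - (⌊t⌋:ℂ) := by
          rw [Int.fract]; push_cast; ring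
        rw [hfs, hft]; ring
      rw [e1, (hgp1.int_mul ⌊s⌋) _, (hgpη.int_mul ⌊t⌋) _]
    rw [key]
    exact hC (Int.fract s, Int.fract t)
      ⟨⟨(Int.fract_nonneg s), (Int.fract_lt_one s).le⟩,
       ⟨(Int.fract_nonneg t), (Int.fract_lt_one t).le⟩⟩
  have hbdd : IsBounded (Set.range g) := by
    rw [Metric.isBounded_iff_subset_closedBall 0]
    exact ⟨C, by rintro w ⟨z, rfl⟩; simpa [Metric.mem_closedBall] using hbd z⟩
  intro z
  have hzz := hgd.apply_eq_apply_of_bounded hbdd z 0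
  have hg0 : g 0 = f 0 := by simp [hg, he]
  have hfz : f z * e z = f 0 := by rw [← hg0]; exact hzz
  calc f z = f z * (e z * Complex.exp (-(2 * (Real.pi:ℂ) * I) * ((b:ℂ) * z))) := by
        rw [he]
        simp only []
        rw [mul_comm (Complex.exp _), hexp]
        ring
    _ = f 0 * Complex.exp (-(2 * (Real.pi:ℂ) * I) * ((b:ℂ) * z)) := by
        rw [← mul_assoc, hfz]

end ThetaAux

/-- If `c ∉ Γ` then `Θ_{0,c}(Γ) = {0}`; and if `c = a + bη ∈ Γ` (`a, b ∈ ℤ`) then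
`Θ_{0,c}(Γ)` is one-dimensional, consisting exactly of the scalar multiples of
`z ↦ e^{−2πibz}`. -/
theorem thetaSpace_zero (η : ℂ) (hη : 0 < η.im) (c : ℂ) :
    (c ∉ latticeGamma η → ThetaSpace η 0 c = ⊥) ∧
    (∀ a b : ℤ, c = (a : ℂ) + (b : ℂ) * η →
      ThetaSpace η 0 c =
        Submodule.span ℂ {fun z : ℂ => Complex.exp (-(2 * (Real.pi : ℂ) * I) * (b * z))} ∧
      Module.finrank ℂ (ThetaSpace η 0 c) = 1) := by
  constructor
  · -- non-lattice case
    intro hc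
    rw [Submodule.eq_bot_iff]
    rintro f ⟨hf1, hf2, hf3⟩
    have hpη : ∀ z, f (z + η) = Complex.exp (-(2 * (Real.pi:ℂ) * I) * c) * f z := by
      intro z
      rw [hf3 z]
      norm_num
    have hper : Function.Periodic (fun x : ℝ => f x) 1 := by
      intro x
      show f ((x + 1 : ℝ) : ℂ) = f x
      rw [show ((x + 1 : ℝ) : ℂ) = ((x:ℝ):ℂ) + 1 by push_cast; ring, hf2]
    have hcontlift : Continuous hper.lift :=
      Continuous.quotient_liftOn' (hf1.continuous.comp Complex.continuous_ofReal) _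
    have hcoeff : ∀ n : ℤ, fourierCoeff hper.lift n = 0 := by
      intro n
      have hrel := coeff_relation η c f hf1 hf2 hpη n
      have hne : Complex.exp (-(2 * (Real.pi:ℂ) * I) * ((n:ℂ) * η + c)) ≠ 1 := by
        intro h1
        rw [Complex.exp_eq_one_iff] at h1
        obtain ⟨k, hk⟩ := h1
        apply hc
        refine ⟨-k, -n, ?_⟩
        have h2 : (2 * (Real.pi:ℂ) * I) ≠ 0 := Complex.two_pi_I_ne_zero
        have h3 : (2 * (Real.pi:ℂ) * I) * (c - (((-k:ℤ):ℂ) + ((-n:ℤ):ℂ) * η)) = 0 := by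
          push_cast; linear_combination -hk
        have h4 := (mul_eq_zero.mp h3).resolve_left h2
        exact sub_eq_zero.mp h4
      rw [lift_fourierCoeff f hper n]
      by_contra habs
      exact hne (mul_right_cancel₀ habs (by rw [hrel, one_mul]))
    have hzero := fourier_uniqueness ⟨hper.lift, hcontlift⟩ hcoeff
    have hre : ∀ x : ℝ, f x = 0 := by
      intro x
      have h5 := ContinuousMap.congr_fun hzero (((x : ℝ) : AddCircle (1:ℝ)))
      simpa [Function.Periodic.lift_coe] using h5
    funext z
    exact eq_zero_of_real_zero f hf1 hre z
  · -- lattice case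
    intro a b hab
    set v : ℂ → ℂ := fun z : ℂ => Complex.exp (-(2 * (Real.pi : ℂ) * I) * ((b:ℂ) * z)) with hv
    have hvmem : v ∈ ThetaSpace η 0 c := by
      refine ⟨(differentiable_const _ |>.mul
        (differentiable_const _ |>.mul differentiable_id)).cexp, fun z => ?_, fun z => ?_⟩
      · simp only [hv]
        rw [show -(2 * (Real.pi:ℂ) * I) * ((b:ℂ) * (z+1))
          = -(2 * (Real.pi:ℂ) * I) * ((b:ℂ) * z) + -(2 * (Real.pi:ℂ) * I) * (b:ℂ) by ring,
          Complex.exp_add, exp_neg_two_pi_I_int b, mul_one]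
      · simp only [hv, hab]
        rw [← Complex.exp_add,
          show -(2 * (Real.pi:ℂ) * I) * (((0:ℤ):ℂ) * z + ((a:ℂ) + (b:ℂ) * η))
              + -(2 * (Real.pi:ℂ) * I) * ((b:ℂ) * z)
            = -(2 * (Real.pi:ℂ) * I) * (a:ℂ) + -(2 * (Real.pi:ℂ) * I) * ((b:ℂ) * (z + η)) by
              push_cast; ring,
          Complex.exp_add, exp_neg_two_pi_I_int a, one_mul]
    have hspan : ThetaSpace η 0 c = Submodule.span ℂ {v} := by
      apply le_antisymm
      · rintro f ⟨hf1, hf2, hf3⟩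
        have hpη : ∀ z, f (z + η)
            = Complex.exp (-(2 * (Real.pi:ℂ) * I) * ((a:ℂ) + (b:ℂ) * η)) * f z := by
          intro z; rw [hf3 z, hab]; norm_num
        have hform := lattice_case η hη a b f hf1 hf2 hpη
        rw [Submodule.mem_span_singleton]
        refine ⟨f 0, ?_⟩
        funext z
        show f 0 • v z = f z
        rw [smul_eq_mul, hv, ← hform z]
      · rw [Submodule.span_le, Set.singleton_subset_iff]
        exact hvmem
    refine ⟨hspan, ?_⟩
    have hvne : v ≠ 0 := by
      intro h0
      have := congrFun h0 0
      simp [hv] at this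
    rw [hspan]
    exact finrank_span_singleton hvne
end

section
/- Let m ∈ ℤ and c ∈ ℂ. There exists an entire, nowhere-vanishing function g : ℂ → ℂ satisfying g(z+1) = g(z) and g(z+η) = e^{−2πi(mz+c)} g(z) for all z ∈ ℂ if and only if m = 0 and c ∈ Γ. (Equivalently, the line bundle ξ_{m,c} on the elliptic curve ℂ/Γ whose sections satisfy these functional equations is trivial if and only if m = 0 and c ∈ Γ, so ξ_{m,c} ≅ ξ_{m',c'} if and only if m = m' and c − c' ∈ Γ.) -/
open Complex

/-- An entire function has entire derivative. -/
lemma differentiable_deriv_of_entire {g : ℂ → ℂ} (hg : Differentiable ℂ g) :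
    Differentiable ℂ (deriv g) := by
  have h : AnalyticOnNhd ℂ g Set.univ := fun z _ => hg.analyticAt z
  exact fun z => (h.deriv z (Set.mem_univ z)).differentiableAt

/-- A doubly periodic entire function is constant. -/
lemma doubly_periodic_const {η : ℂ} (hη : 0 < η.im) {p : ℂ → ℂ}
    (hp : Differentiable ℂ p) (h1 : ∀ z, p (z + 1) = p z) (h2 : ∀ z, p (z + η) = p z) :
    ∀ z, p z = p 0 := by
  have per1 : Function.Periodic p 1 := h1
  have perη : Function.Periodic p η := h2
  -- the compact fundamental parallelogram
  set K : Set ℂ := (fun st : ℝ × ℝ => (st.1 : ℂ) + (st.2 : ℂ) * η) ''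
    (Set.Icc (0:ℝ) 1 ×ˢ Set.Icc (0:ℝ) 1) with hK
  have hKc : IsCompact K := by
    apply (isCompact_Icc.prod isCompact_Icc).image
    fun_prop
  have hsub : Set.range p ⊆ p '' K := by
    rintro _ ⟨z, rfl⟩
    set t : ℝ := z.im / η.im with ht
    set s : ℝ := z.re - t * η.re with hs
    have hz : z = (s : ℂ) + (t : ℂ) * η := by
      apply Complex.ext <;> simp [hs, ht]
      field_simp
    set w : ℂ := ((Int.fract s : ℝ) : ℂ) + ((Int.fract t : ℝ) : ℂ) * η with hw
    refine ⟨w, ⟨(Int.fract s, Int.fract t), ⟨⟨(Int.fract_nonneg s),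
      (Int.fract_lt_one s).le⟩, (Int.fract_nonneg t), (Int.fract_lt_one t).le⟩, hw.symm⟩, ?_⟩
    have hfs : (Int.fract s : ℝ) = s - (⌊s⌋ : ℤ) := rfl
    have hft : (Int.fract t : ℝ) = t - (⌊t⌋ : ℤ) := rfl
    have hzw : z = w + (⌊s⌋ : ℂ) * 1 + (⌊t⌋ : ℂ) * η := by
      rw [hz, hw, hfs, hft]
      push_cast
      ring
    calc p w = p (w + (⌊s⌋ : ℂ) * 1) := ((per1.int_mul ⌊s⌋) w).symm
      _ = p (w + (⌊s⌋ : ℂ) * 1 + (⌊t⌋ : ℂ) * η) := ((perη.int_mul ⌊t⌋) _).symm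
      _ = p z := by rw [← hzw]
  have hb : Bornology.IsBounded (Set.range p) :=
    (hKc.image hp.continuous).isBounded.subset hsub
  exact fun z => hp.apply_eq_apply_of_bounded hb z 0

/-- There is an entire nowhere-vanishing function `g` with `g(z+1) = g(z)` and
`g(z+η) = e^{−2πi(mz+c)} g(z)` if and only if `m = 0` and `c ∈ Γ` (i.e. the line bundle
`ξ_{m,c}` on `ℂ/Γ` is trivial iff `m = 0` and `c ∈ Γ`). -/
theorem exists_nowhere_vanishing_section_iff (η : ℂ) (hη : 0 < η.im) (m : ℤ) (c : ℂ) :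
    (∃ g : ℂ → ℂ, Differentiable ℂ g ∧ (∀ z : ℂ, g z ≠ 0) ∧
      (∀ z : ℂ, g (z + 1) = g z) ∧
      (∀ z : ℂ, g (z + η) = Complex.exp (-(2 * (Real.pi : ℂ) * I) * (m * z + c)) * g z)) ↔
    (m = 0 ∧ c ∈ latticeGamma η) := by
  have h2pi : (2 * (Real.pi : ℂ) * I) ≠ 0 := by
    simp [Real.pi_ne_zero, I_ne_zero, Complex.ext_iff]
  constructor
  · rintro ⟨g, hg, hne, hper1, hperη⟩
    set E : ℂ → ℂ := fun z => Complex.exp (-(2 * (Real.pi : ℂ) * I) * ((m : ℂ) * z + c)) with hE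
    set f : ℂ → ℂ := fun z => deriv g z / g z with hf
    have hgd : Differentiable ℂ (deriv g) := differentiable_deriv_of_entire hg
    have hfd : Differentiable ℂ f := hgd.div hg hne
    have dg1 : ∀ z, deriv g (z + 1) = deriv g z := by
      intro z
      rw [← deriv_comp_add_const g 1 z, funext hper1]
    have f1 : ∀ z, f (z + 1) = f z := by
      intro z; simp only [hf]; rw [dg1, hper1]
    have hEd : ∀ z, HasDerivAt E (E z * (-(2 * (Real.pi : ℂ) * I) * (m : ℂ))) z := by
      intro z
      have h0 : HasDerivAt (fun w : ℂ => -(2 * (Real.pi : ℂ) * I) * ((m : ℂ) * w + c))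
          (-(2 * (Real.pi : ℂ) * I) * (m : ℂ)) z := by
        simpa using (((hasDerivAt_id z).const_mul (m : ℂ)).add_const c).const_mul
          (-(2 * (Real.pi : ℂ) * I))
      simpa [hE] using h0.cexp
    have dgη : ∀ z, deriv g (z + η)
        = E z * (deriv g z + (-(2 * (Real.pi : ℂ) * I) * (m : ℂ)) * g z) := by
      intro z
      rw [← deriv_comp_add_const g η z, funext hperη]
      have h3 : HasDerivAt (fun w => E w * g w)
          (E z * (-(2 * (Real.pi : ℂ) * I) * (m : ℂ)) * g z + E z * deriv g z) z :=
        (hEd z).mul (hg z).hasDerivAt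
      rw [h3.deriv]; ring
    have fη : ∀ z, f (z + η) = f z + (-(2 * (Real.pi : ℂ) * I) * (m : ℂ)) := by
      intro z
      have hEne : E z ≠ 0 := Complex.exp_ne_zero _
      simp only [hf]
      rw [dgη, hperη, mul_div_mul_left _ _ hEne, add_div, mul_div_assoc,
        div_self (hne z), mul_one]
    have hpd : Differentiable ℂ (deriv f) := differentiable_deriv_of_entire hfd
    have p1 : ∀ z, deriv f (z + 1) = deriv f z := by
      intro z
      rw [← deriv_comp_add_const f 1 z, funext f1]
    have pη : ∀ z, deriv f (z + η) = deriv f z := by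
      intro z
      rw [← deriv_comp_add_const f η z, funext fη, deriv_add_const]
    have pconst := doubly_periodic_const hη hpd p1 pη
    set β := deriv f 0 with hβ
    have haff : ∀ z, f z - β * z = f 0 - β * 0 := by
      intro z
      have hFd : Differentiable ℂ (fun w => f w - β * w) :=
        hfd.sub (differentiable_id.const_mul β)
      refine is_const_of_deriv_eq_zero hFd ?_ z 0
      intro w
      have h := ((hfd w).hasDerivAt.sub ((hasDerivAt_id w).const_mul β)).deriv
      simp only [id_eq] at h
      rw [show (fun w => f w - β * w) = (f - fun y => β * y) from rfl, h, pconst w]; ring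
    have hβ0 : β = 0 := by
      have h10 : f 1 = f 0 := by simpa using f1 0
      have h := haff 1
      rw [h10] at h
      linear_combination -h
    have hfconst : ∀ z, f z = f 0 := by
      intro z
      have := haff z
      rw [hβ0] at this
      simpa using this
    have hm : (m : ℂ) = 0 := by
      have h := fη 0
      rw [zero_add, hfconst η] at h
      have h2 : -(2 * (Real.pi : ℂ) * I) * (m : ℂ) = 0 := by linear_combination -h
      exact (mul_eq_zero.mp h2).resolve_left (neg_ne_zero.mpr h2pi)
    have hm0 : m = 0 := by exact_mod_cast hm
    refine ⟨hm0, ?_⟩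
    set α := f 0 with hα
    have hderiv : ∀ z, deriv g z = α * g z := by
      intro z
      have h := hfconst z
      simp only [hf] at h
      exact (div_eq_iff (hne z)).mp h
    have hu : ∀ z, g z * Complex.exp (-(α * z)) = g 0 * Complex.exp (-(α * 0)) := by
      intro z
      have hud : Differentiable ℂ (fun w => g w * Complex.exp (-(α * w))) := by
        apply hg.mul
        apply Complex.differentiable_exp.comp
        exact (differentiable_id.const_mul α).neg
      refine is_const_of_deriv_eq_zero hud ?_ z 0
      intro w
      have h1 : HasDerivAt (fun w : ℂ => -(α * w)) (-α) w := by
        have h0 := ((hasDerivAt_id w).const_mul α).neg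
        rw [mul_one] at h0
        exact h0
      have h3 := ((hg w).hasDerivAt.mul h1.cexp).deriv
      rw [show (fun w => g w * Complex.exp (-(α * w))) = (g * fun x => Complex.exp (-(α * x))) from rfl,
        h3, hderiv w]; ring
    have hgz : ∀ z, g z = g 0 * Complex.exp (α * z) := by
      intro z
      have h := hu z
      simp only [mul_zero, neg_zero, Complex.exp_zero, mul_one] at h
      calc g z = g z * Complex.exp (-(α * z)) * Complex.exp (α * z) := by
            rw [mul_assoc, ← Complex.exp_add]; simp
        _ = g 0 * Complex.exp (α * z) := by rw [h]
    have hexpα : Complex.exp α = 1 := by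
      have h := hper1 0
      rw [zero_add, hgz 1] at h
      have h' : g 0 * Complex.exp (α * 1) = g 0 * 1 := by rw [h, mul_one]
      have := mul_left_cancel₀ (hne 0) h'
      simpa using this
    obtain ⟨a, ha⟩ := Complex.exp_eq_one_iff.mp hexpα
    have hexpη : Complex.exp (α * η + 2 * (Real.pi : ℂ) * I * c) = 1 := by
      have h := hperη 0
      rw [zero_add, hgz η, hm] at h
      have h2 : Complex.exp (α * η) = Complex.exp (-(2 * (Real.pi : ℂ) * I) * (0 * 0 + c)) := by
        have h' : g 0 * Complex.exp (α * η)
            = g 0 * Complex.exp (-(2 * (Real.pi : ℂ) * I) * (0 * 0 + c)) := by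
          rw [h]; ring
        exact mul_left_cancel₀ (hne 0) h'
      rw [Complex.exp_add, h2, ← Complex.exp_add,
        show -(2 * (Real.pi : ℂ) * I) * (0 * 0 + c) + 2 * (Real.pi : ℂ) * I * c = 0 by ring,
        Complex.exp_zero]
    obtain ⟨b, hb⟩ := Complex.exp_eq_one_iff.mp hexpη
    refine ⟨b, -a, ?_⟩
    have hkey : (2 * (Real.pi : ℂ) * I) * c
        = (2 * (Real.pi : ℂ) * I) * ((b : ℂ) + ((-a : ℤ) : ℂ) * η) := by
      push_cast
      linear_combination hb - η * ha
    exact mul_left_cancel₀ h2pi hkey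
  · rintro ⟨rfl, a, b, rfl⟩
    refine ⟨fun z => Complex.exp (-(2 * (Real.pi : ℂ) * I) * ((b : ℂ) * z)), ?_, ?_, ?_, ?_⟩
    · fun_prop
    · exact fun z => Complex.exp_ne_zero _
    · intro z
      show Complex.exp _ = Complex.exp _
      rw [Complex.exp_eq_exp_iff_exists_int]
      exact ⟨-b, by push_cast; ring⟩
    · intro z
      rw [← Complex.exp_add,
        Complex.exp_eq_exp_iff_exists_int]
      exact ⟨a, by push_cast; ring⟩
end
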